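/- Let X and Y be bounded-variation paths (or more generally group-like tensor series with factorial decay). Then log S(X) has infinite radius of convergence if and only if log S(Y ⊔ X ⊔ reverse(Y)) has infinite radius of convergence, where ⊔ denotes concatenation, S is the signature, and S(Y ⊔ X ⊔ reverse(Y)) = S(Y) ⊗ S(X) ⊗ S(Y)^{-1}. -/

import Mathlib

/-!
The projective norm is submultiplicative, so `‖(ξ ⊗ η)ₙ‖ zⁿ` is dominated by the Cauchy product
of `‖ξₖ‖ zᵏ` and `‖ηₖ‖ zᵏ`: infinite radius of convergence is stable under products. Factorial
decay gives `g` and `g⁻¹` infinite radius (`Γ(x + 1)` outgrows every exponential), so both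
`l ↦ g ⊗ l ⊗ g⁻¹` and its inverse `m ↦ g⁻¹ ⊗ m ⊗ g` preserve the property.
-/

open scoped TensorProduct

noncomputable section

variable (V : Type*) [NormedAddCommGroup V] [NormedSpace ℝ V]

/-- The `n`-th tensor power `V^⊗n`. -/
abbrev TComp (n : ℕ) := ⨂[ℝ] (_ : Fin n), V

/-- Formal tensor series `T((V)) = Π_{n≥0} V^⊗n`. -/
def TSeries := ∀ n : ℕ, TComp V n

variable {V}

/-- The projective tensor (semi)norm on `V^⊗n`. -/
def tnorm {n : ℕ} (x : TComp V n) : ℝ := PiTensorProduct.projectiveSeminorm x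

/-- Multiplication `V^⊗k ⊗ V^⊗m → V^⊗(k+m)`. -/
def mulComp {k m : ℕ} (x : TComp V k) (y : TComp V m) : TComp V (k + m) :=
  (PiTensorProduct.reindex ℝ (fun _ => V) finSumFinEquiv)
    ((PiTensorProduct.tmulEquiv ℝ V) (x ⊗ₜ[ℝ] y))

/-- Degree cast `V^⊗k ≃ V^⊗m` for `k = m`. -/
def castComp {k m : ℕ} (h : k = m) (x : TComp V k) : TComp V m :=
  (PiTensorProduct.reindex ℝ (fun _ => V) (finCongr h)) x

/-- The product of tensor series: `(ξ ⊗ η)_n = Σ_{k=0}^{n} ξ_k ⊗ η_{n−k}`. -/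
def seriesMul (ξ η : TSeries V) : TSeries V := fun n =>
  ∑ k ∈ (Finset.range (n + 1)).attach,
    castComp (by have := Finset.mem_range.mp k.2; omega)
      (mulComp (ξ k.1) (η (n - k.1)))

/-- The unit tensor series `1 = (1, 0, 0, …)`. -/
def oneSeries : TSeries V := fun n =>
  match n with
  | 0 => PiTensorProduct.tprod ℝ (fun i : Fin 0 => i.elim0)
  | _ + 1 => 0

/-- `ξ` has factorial decay: `‖πₙ ξ‖ ≤ C ω^{n/p}/(n/p)!` for `n ≥ 1`. -/
def FactorialDecay (ξ : TSeries V) : Prop :=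
  ∃ C ω p : ℝ, 0 < C ∧ 0 < ω ∧ 1 ≤ p ∧
    ∀ n : ℕ, 1 ≤ n →
      tnorm (ξ n) ≤ C * ω ^ ((n : ℝ) / p) / Real.Gamma ((n : ℝ) / p + 1)

/-- `ξ` has infinite radius of convergence: `Σ ‖πₙ ξ‖ zⁿ` converges for every `z`. -/
def InfiniteROC (ξ : TSeries V) : Prop :=
  ∀ z : ℝ, Summable fun n => tnorm (ξ n) * z ^ n

open Finset Filter Topology PiTensorProduct
open scoped Nat

namespace PiTensorProduct

variable {ι : Type*} [Fintype ι] {E : ι → Type*} [∀ i, SeminormedAddCommGroup (E i)]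
  [∀ i, NormedSpace ℝ (E i)]

theorem norm_apply_le_of_norm_tprod_le {G : Type*} [SeminormedAddCommGroup G] [NormedSpace ℝ G]
    (L : (⨂[ℝ] i, E i) →ₗ[ℝ] G) {K : ℝ} (hK : 0 ≤ K)
    (h : ∀ m : Π i, E i, ‖L (tprod ℝ m)‖ ≤ K * ∏ i, ‖m i‖) (x : ⨂[ℝ] i, E i) :
    ‖L x‖ ≤ K * ‖x‖ := by
  set f := (L.compMultilinearMap (tprod ℝ)).mkContinuous K h
  have hf : lift f.toMultilinearMap = L := by
    ext m; exact lift.tprod m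
  calc ‖L x‖ = ‖lift f.toMultilinearMap x‖ := by rw [hf]
    _ ≤ ‖f‖ * ‖x‖ := norm_eval_le_projectiveSeminorm f x
    _ ≤ K * ‖x‖ := by gcongr; exact MultilinearMap.mkContinuous_norm_le _ hK h

theorem norm_reindex_le {ι' : Type*} [Fintype ι'] (e : ι ≃ ι') (x : ⨂[ℝ] i, E i) :
    ‖reindex ℝ E e x‖ ≤ ‖x‖ := by
  simpa using norm_apply_le_of_norm_tprod_le (reindex ℝ E e).toLinearMap zero_le_one
    (fun m => by simpa [Equiv.prod_comp e.symm (fun i => ‖m i‖)] using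
      projectiveSeminorm_tprod_le (fun i => m (e.symm i))) x

end PiTensorProduct

theorem Finset.Nat.sum_antidiagonal_antidiagonal_assoc {M : Type*} [AddCommMonoid M]
    (f : ℕ → ℕ → ℕ → M) (n : ℕ) :
    ∑ p ∈ antidiagonal n, ∑ q ∈ antidiagonal p.1, f q.1 q.2 p.2 =
      ∑ p ∈ antidiagonal n, ∑ q ∈ antidiagonal p.2, f p.1 q.1 q.2 := by
  simp only [sum_sigma']
  apply sum_nbij' (fun x => ⟨(x.2.1, x.2.2 + x.1.2), (x.2.2, x.1.2)⟩)
    (fun x => ⟨(x.1.1 + x.2.1, x.2.2), (x.1.1, x.2.1)⟩) <;>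
    aesop (add simp [add_assoc])

theorem summable_mul_pow_of_forall_tendsto_zero {a : ℕ → ℝ}
    (h : ∀ r : ℝ, Tendsto (fun n => a n * r ^ n) atTop (𝓝 0)) (z : ℝ) :
    Summable fun n => a n * z ^ n := by
  have hbdd : ∀ᶠ n in atTop, ‖a n * (2 * z) ^ n‖ < 1 := by
    have := (h (2 * z)).norm
    rw [norm_zero] at this
    exact this.eventually (gt_mem_nhds one_pos)
  refine .of_norm_bounded_eventually_nat summable_geometric_two (hbdd.mono fun n hn => ?_)
  calc ‖a n * z ^ n‖ = ‖a n * (2 * z) ^ n‖ * (1 / 2) ^ n := by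
        rw [← Real.norm_of_nonneg (by positivity : (0 : ℝ) ≤ (1 / 2) ^ n), ← norm_mul, mul_assoc,
          ← mul_pow]
        ring_nf
    _ ≤ 1 * (1 / 2) ^ n := by gcongr
    _ = (1 / 2) ^ n := one_mul _

theorem Real.factorial_floor_le_Gamma_add_one {x : ℝ} (hx : 1 ≤ x) :
    (⌊x⌋₊ ! : ℝ) ≤ Real.Gamma (x + 1) := by
  have h1 : (1 : ℝ) ≤ ⌊x⌋₊ := by exact_mod_cast (Nat.one_le_floor_iff x).2 hx
  rw [← Real.Gamma_nat_eq_factorial]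
  exact Real.Gamma_strictMonoOn_Ici.monotoneOn (Set.mem_Ici.2 (by linarith))
    (Set.mem_Ici.2 (by linarith))
    (by linarith [Nat.floor_le (zero_le_one.trans hx)])

theorem Real.tendsto_rpow_div_Gamma_add_one {t : ℝ} (ht : 0 ≤ t) :
    Tendsto (fun x => t ^ x / Real.Gamma (x + 1)) atTop (𝓝 0) := by
  set M := max 1 t
  have hM : 1 ≤ M := le_max_left _ _
  have hlim : Tendsto (fun x : ℝ => M * (M ^ ⌊x⌋₊ / ⌊x⌋₊ !)) atTop (𝓝 0) := by
    simpa using ((FloorSemiring.tendsto_pow_div_factorial_atTop M).comp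
      tendsto_nat_floor_atTop).const_mul M
  refine tendsto_of_tendsto_of_tendsto_of_le_of_le' tendsto_const_nhds hlim ?_ ?_
  · filter_upwards [eventually_ge_atTop 0] with x hx
    exact div_nonneg (Real.rpow_nonneg ht x) (Real.Gamma_nonneg_of_nonneg (by linarith))
  · filter_upwards [eventually_ge_atTop 1] with x hx
    have hpow : t ^ x ≤ M * M ^ ⌊x⌋₊ := calc
      t ^ x ≤ M ^ x := Real.rpow_le_rpow ht (le_max_right _ _) (by linarith)
      _ ≤ M ^ ((⌊x⌋₊ + 1 : ℕ) : ℝ) :=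
        Real.rpow_le_rpow_of_exponent_le hM (by push_cast; linarith [Nat.lt_floor_add_one x])
      _ = M * M ^ ⌊x⌋₊ := by rw [Real.rpow_natCast, pow_succ']
    rw [← mul_div_assoc]
    exact div_le_div₀ (by positivity) hpow (by positivity)
      (Real.factorial_floor_le_Gamma_add_one hx)

theorem tnorm_eq_norm {n : ℕ} (x : TComp V n) : tnorm x = ‖x‖ := rfl

theorem tnorm_nonneg {n : ℕ} (x : TComp V n) : 0 ≤ tnorm x := norm_nonneg x

theorem tnorm_castComp_le {k m : ℕ} (h : k = m) (x : TComp V k) :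
    tnorm (castComp h x) ≤ tnorm x :=
  norm_reindex_le _ x

def mulCompₗ (k m : ℕ) : TComp V k →ₗ[ℝ] TComp V m →ₗ[ℝ] TComp V (k + m) :=
  (TensorProduct.mk ℝ _ _).compr₂ TensorPower.mulEquiv.toLinearMap

theorem mulCompₗ_apply {k m : ℕ} (x : TComp V k) (y : TComp V m) :
    mulCompₗ k m x y = mulComp x y := rfl

theorem mulComp_tprod_tprod {k m : ℕ} (f : Fin k → V) (g : Fin m → V) :
    mulComp (tprod ℝ f) (tprod ℝ g) = tprod ℝ (Fin.append f g) :=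
  TensorPower.tprod_mul_tprod ℝ f g

theorem tnorm_mulComp_le {k m : ℕ} (x : TComp V k) (y : TComp V m) :
    tnorm (mulComp x y) ≤ tnorm x * tnorm y := by
  have tprod_left (f : Fin k → V) (y : TComp V m) :
      ‖mulComp (tprod ℝ f) y‖ ≤ (∏ i, ‖f i‖) * ‖y‖ := by
    refine norm_apply_le_of_norm_tprod_le (mulCompₗ k m (tprod ℝ f)) (by positivity)
      (fun g => ?_) y
    simpa [mulCompₗ_apply, mulComp_tprod_tprod, Fin.prod_univ_add] using
      projectiveSeminorm_tprod_le (𝕜 := ℝ) (Fin.append f g)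
  simpa [tnorm_eq_norm, mulCompₗ_apply, mul_comm] using norm_apply_le_of_norm_tprod_le
      ((mulCompₗ k m).flip y) (norm_nonneg y) (fun f => by
        simpa [mulCompₗ_apply, mul_comm] using tprod_left f y) x

-- Total in the degrees, so that sums over `antidiagonal n` need no dependent casts.
def mulTo (n : ℕ) {a b : ℕ} : TComp V a →ₗ[ℝ] TComp V b →ₗ[ℝ] TComp V n :=
  if h : a + b = n then (mulCompₗ a b).compr₂ (TensorPower.cast ℝ V h).toLinearMap else 0

theorem castComp_rfl {k : ℕ} (x : TComp V k) : castComp rfl x = x :=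
  LinearEquiv.congr_fun (TensorPower.cast_refl ℝ V rfl) x

theorem castComp_castComp {i j k : ℕ} (h : i = j) (h' : j = k) (x : TComp V i) :
    castComp h' (castComp h x) = castComp (h.trans h') x :=
  TensorPower.cast_cast h h' x

theorem mulComp_assoc {a b c : ℕ} (x : TComp V a) (y : TComp V b) (z : TComp V c) :
    castComp (add_assoc a b c) (mulComp (mulComp x y) z) = mulComp x (mulComp y z) :=
  TensorPower.mul_assoc x y z

section mulTo

variable {n a b : ℕ}

theorem mulTo_of_add_eq (h : a + b = n) (x : TComp V a) (y : TComp V b) :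
    mulTo n x y = castComp h (mulComp x y) := by
  simp only [mulTo, dif_pos h]
  rfl

theorem mulTo_of_add_ne (h : a + b ≠ n) (x : TComp V a) (y : TComp V b) :
    mulTo n x y = 0 := by
  simp [mulTo, h]

theorem tnorm_mulTo_le (x : TComp V a) (y : TComp V b) :
    tnorm (mulTo n x y) ≤ tnorm x * tnorm y := by
  by_cases h : a + b = n
  · rw [mulTo_of_add_eq h]
    exact (tnorm_castComp_le h _).trans (tnorm_mulComp_le x y)
  · simp only [mulTo_of_add_ne h, tnorm_eq_norm, norm_zero]
    positivity

theorem mulTo_assoc {c d e : ℕ} (x : TComp V a) (y : TComp V b) (z : TComp V c)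
    (hd : a + b = d) (he : b + c = e) :
    mulTo n (mulTo d x y) z = mulTo n x (mulTo e y z) := by
  subst hd he
  rw [mulTo_of_add_eq rfl x y, mulTo_of_add_eq rfl y z, castComp_rfl, castComp_rfl]
  by_cases hn : a + b + c = n
  · rw [mulTo_of_add_eq hn, mulTo_of_add_eq (by omega), ← mulComp_assoc, castComp_castComp]
  · rw [mulTo_of_add_ne hn, mulTo_of_add_ne (by omega)]

theorem mulTo_one_left (x : TComp V n) : mulTo n (oneSeries (V := V) 0) x = x := by
  rw [mulTo_of_add_eq (zero_add n)]
  exact TensorPower.one_mul x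

theorem mulTo_one_right (x : TComp V n) : mulTo n x (oneSeries (V := V) 0) = x := by
  rw [mulTo_of_add_eq (add_zero n)]
  exact TensorPower.mul_one x

end mulTo

theorem oneSeries_eq_zero {k : ℕ} (hk : k ≠ 0) : oneSeries (V := V) k = 0 := by
  obtain ⟨j, rfl⟩ := Nat.exists_eq_succ_of_ne_zero hk
  rfl

section seriesMul

variable (ξ η ζ : TSeries V)

theorem seriesMul_eq_sum_range (n : ℕ) :
    seriesMul ξ η n = ∑ k ∈ range (n + 1), mulTo n (ξ k) (η (n - k)) := by
  rw [seriesMul, ← sum_attach (range (n + 1)) (fun k => mulTo n (ξ k) (η (n - k)))]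
  refine sum_congr rfl fun k _ => ?_
  rw [mulTo_of_add_eq (by have := mem_range.1 k.2; omega)]

theorem tnorm_seriesMul_le (n : ℕ) :
    tnorm (seriesMul ξ η n) ≤ ∑ k ∈ range (n + 1), tnorm (ξ k) * tnorm (η (n - k)) := by
  rw [seriesMul_eq_sum_range, tnorm_eq_norm]
  refine (norm_sum_le _ _).trans (sum_le_sum fun k _ => ?_)
  exact tnorm_mulTo_le _ _

theorem seriesMul_eq_sum_antidiagonal (n : ℕ) :
    seriesMul ξ η n = ∑ p ∈ antidiagonal n, mulTo n (ξ p.1) (η p.2) := by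
  rw [seriesMul_eq_sum_range, Finset.Nat.sum_antidiagonal_eq_sum_range_succ
    (fun i j => mulTo n (ξ i) (η j))]

theorem one_seriesMul : seriesMul oneSeries ξ = ξ := by
  funext n
  rw [seriesMul_eq_sum_antidiagonal, sum_eq_single_of_mem (0, n) (by simp)]
  · exact mulTo_one_left (ξ n)
  · rintro ⟨a, b⟩ hab hne
    have ha : a ≠ 0 := by rintro rfl; simp_all
    simp [oneSeries_eq_zero ha]

theorem seriesMul_one : seriesMul ξ oneSeries = ξ := by
  funext n
  rw [seriesMul_eq_sum_antidiagonal, sum_eq_single_of_mem (n, 0) (by simp)]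
  · exact mulTo_one_right (ξ n)
  · rintro ⟨a, b⟩ hab hne
    have hb : b ≠ 0 := by rintro rfl; simp_all
    simp [oneSeries_eq_zero hb]

theorem seriesMul_assoc : seriesMul (seriesMul ξ η) ζ = seriesMul ξ (seriesMul η ζ) := by
  funext n
  simp only [seriesMul_eq_sum_antidiagonal, map_sum, LinearMap.sum_apply]
  calc _ = ∑ p ∈ antidiagonal n, ∑ q ∈ antidiagonal p.1,
        mulTo n (ξ q.1) (mulTo (q.2 + p.2) (η q.2) (ζ p.2)) :=
      sum_congr rfl fun p _ => sum_congr rfl fun q hq =>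
        mulTo_assoc _ _ _ (mem_antidiagonal.1 hq) rfl
    _ = ∑ p ∈ antidiagonal n, ∑ q ∈ antidiagonal p.2,
        mulTo n (ξ p.1) (mulTo (q.1 + q.2) (η q.1) (ζ q.2)) :=
      Finset.Nat.sum_antidiagonal_antidiagonal_assoc
        (fun a b c => mulTo n (ξ a) (mulTo (b + c) (η b) (ζ c))) n
    _ = _ := sum_congr rfl fun p _ => sum_congr rfl fun q hq => by
      rw [mem_antidiagonal.1 hq]

end seriesMul

theorem InfiniteROC.mul {ξ η : TSeries V} (hξ : InfiniteROC ξ) (hη : InfiniteROC η) :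
    InfiniteROC (seriesMul ξ η) := by
  intro z
  set a := fun n => tnorm (ξ n) * |z| ^ n
  set b := fun n => tnorm (η n) * |z| ^ n
  have hcauchy : Summable fun n => ∑ k ∈ range (n + 1), a k * b (n - k) :=
    summable_sum_mul_range_of_summable_mul
      ((hξ |z|).mul_of_nonneg (hη |z|) (fun n => mul_nonneg (tnorm_nonneg _) (by positivity))
        (fun n => mul_nonneg (tnorm_nonneg _) (by positivity)))
  refine .of_norm_bounded hcauchy fun n => ?_
  calc ‖tnorm (seriesMul ξ η n) * z ^ n‖ = tnorm (seriesMul ξ η n) * |z| ^ n := by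
        rw [norm_mul, norm_pow, Real.norm_eq_abs, Real.norm_eq_abs, abs_of_nonneg (tnorm_nonneg _)]
    _ ≤ (∑ k ∈ range (n + 1), tnorm (ξ k) * tnorm (η (n - k))) * |z| ^ n := by
        gcongr
        exact tnorm_seriesMul_le ξ η n
    _ = ∑ k ∈ range (n + 1), a k * b (n - k) := by
        rw [sum_mul]
        refine sum_congr rfl fun k hk => ?_
        rw [← pow_mul_pow_sub _ (mem_range_succ_iff.1 hk)]
        ring

theorem FactorialDecay.infiniteROC {ξ : TSeries V} (h : FactorialDecay ξ) : InfiniteROC ξ := by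
  obtain ⟨C, ω, p, -, hω, hp, hbound⟩ := h
  have hp0 : 0 < p := zero_lt_one.trans_le hp
  refine summable_mul_pow_of_forall_tendsto_zero fun r => ?_
  have hx : Tendsto (fun n : ℕ => (n : ℝ) / p) atTop atTop :=
    tendsto_natCast_atTop_atTop.atTop_div_const hp0
  have hlim := ((Real.tendsto_rpow_div_Gamma_add_one
    (mul_nonneg hω.le (Real.rpow_nonneg (abs_nonneg r) p))).comp hx).const_mul C
  rw [mul_zero] at hlim
  refine squeeze_zero_norm' ?_ hlim
  filter_upwards [eventually_ge_atTop 1] with n hn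
  have hrpow : (ω * |r| ^ p) ^ ((n : ℝ) / p) = ω ^ ((n : ℝ) / p) * |r| ^ n := by
    rw [Real.mul_rpow hω.le (Real.rpow_nonneg (abs_nonneg r) p), ← Real.rpow_mul (abs_nonneg r),
      mul_div_cancel₀ _ hp0.ne', Real.rpow_natCast]
  simp only [Function.comp_apply, hrpow]
  calc ‖tnorm (ξ n) * r ^ n‖ = tnorm (ξ n) * |r| ^ n := by
        rw [norm_mul, norm_pow, Real.norm_of_nonneg (tnorm_nonneg _), Real.norm_eq_abs]
    _ ≤ C * ω ^ ((n : ℝ) / p) / Real.Gamma ((n : ℝ) / p + 1) * |r| ^ n := by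
        gcongr
        exact hbound n hn
    _ = _ := by ring

-- `l` stands for `log S(X)` and `g`, `ginv` for `S(Y)`, `S(reverse Y)`, so that
-- `log S(Y ⊔ X ⊔ reverse Y) = g ⊗ l ⊗ g⁻¹`.
theorem log_signature_infinite_ROC_conjugation_invariant_general
    (l g ginv : TSeries V)
    (hinv : seriesMul g ginv = oneSeries ∧ seriesMul ginv g = oneSeries)
    (hgdecay : FactorialDecay g) (hginvdecay : FactorialDecay ginv) :
    InfiniteROC l ↔ InfiniteROC (seriesMul (seriesMul g l) ginv) := by
  have hg := hgdecay.infiniteROC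
  have hginv := hginvdecay.infiniteROC
  refine ⟨fun hl => (hg.mul hl).mul hginv, fun hconj => ?_⟩
  have hl : seriesMul (seriesMul ginv (seriesMul (seriesMul g l) ginv)) g = l := by
    rw [← seriesMul_assoc ginv, ← seriesMul_assoc ginv g, hinv.2, one_seriesMul,
      seriesMul_assoc l, hinv.2, seriesMul_one]
  exact hl ▸ (hginv.mul hconj).mul hg

/-- Let `l = log S(X)` and `g = S(Y)` for BV paths `X, Y` — or, more
generally, let `l ∈ T₀((V))` and let `g` be a tensor series with unit constant term,
two-sided inverse `g⁻¹`, both `g` and `g⁻¹` having factorial decay (as the signatures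
`S(Y)`, `S(reverse Y)` do).  Since `log S(Y ⊔ X ⊔ reverse Y) = g ⊗ l ⊗ g⁻¹`, the
Lyons–Sidorova conjugation invariance reads:  `l` has infinite radius of convergence
if and only if `g ⊗ l ⊗ g⁻¹` has infinite radius of convergence. -/
theorem log_signature_infinite_ROC_conjugation_invariant
    (l g ginv : TSeries V)
    (hl0 : l 0 = 0)
    (hg0 : g 0 = oneSeries 0) (hginv0 : ginv 0 = oneSeries 0)
    (hinv : seriesMul g ginv = oneSeries ∧ seriesMul ginv g = oneSeries)
    (hgdecay : FactorialDecay g) (hginvdecay : FactorialDecay ginv) :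
    InfiniteROC l ↔ InfiniteROC (seriesMul (seriesMul g l) ginv) :=
  log_signature_infinite_ROC_conjugation_invariant_general l g ginv hinv hgdecay hginvdecay

end
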